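/- arXiv:1401.6061 — 5 statements merged into one kernel-verified Lean document; each statement's English description precedes it below -/
import Mathlib

section
/- For infinite cardinals κ and λ, I(λ,κ) implies U(λ,κ): if there is a free proper λ⁺-complete ideal J on κ such that each X ∈ J⁺ has a partition into λ pairwise disjoint sets each in J⁺, and there is a dense family F ⊆ J⁺ such that every descending ω-sequence of sets from F has nonempty intersection, then White has a winning strategy in the cut-and-choose game UG(λ,κ). -/
open Cardinal Set

namespace GamePaper

universe u

/-! ### Gale–Stewart style games.
A play is a sequence `p : ℕ → M`; player ONE (resp. White) moves at even indices,
player TWO (resp. Black) at odd indices.  A strategy for a player is a function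
assigning to the finite sequence of the opponent's prior moves the player's next move. -/

/-- ONE's moves in the play `p` are obtained from the strategy `σ` applied to the
list of TWO's prior moves. -/
def OneFollows {M : Type*} (σ : List M → M) (p : ℕ → M) : Prop :=
  ∀ n : ℕ, p (2 * n) = σ (List.ofFn fun i : Fin n => p (2 * (i : ℕ) + 1))

/-- TWO's moves in the play `p` are obtained from the strategy `σ` applied to the
list of ONE's prior moves. -/
def TwoFollows {M : Type*} (σ : List M → M) (p : ℕ → M) : Prop :=
  ∀ n : ℕ, p (2 * n + 1) = σ (List.ofFn fun i : Fin (n + 1) => p (2 * (i : ℕ)))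

/-- ONE has a winning strategy in the Gale–Stewart game `GS_Λ(A)`. -/
def OneWinsGS {Λ : Type*} (A : Set (ℕ → Λ)) : Prop :=
  ∃ σ : List Λ → Λ, ∀ p : ℕ → Λ, OneFollows σ p → p ∈ A

/-- TWO has a winning strategy in the Gale–Stewart game `GS_Λ(A)`. -/
def TwoWinsGS {Λ : Type*} (A : Set (ℕ → Λ)) : Prop :=
  ∃ σ : List Λ → Λ, ∀ p : ℕ → Λ, TwoFollows σ p → p ∉ A

/-- ONE has a winning strategy in the multiboard game `GS_Λ(A, K)`:
moves are functions `K → Λ`, and ONE wins a play if on some board `ξ` the induced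
play belongs to `A`. -/
def OneWinsGSBoards (Λ K : Type*) (A : Set (ℕ → Λ)) : Prop :=
  ∃ σ : List (K → Λ) → K → Λ, ∀ q : ℕ → K → Λ, OneFollows σ q →
    ∃ ξ : K, (fun n => q n ξ) ∈ A

/-- TWO has a winning strategy in the multiboard game `GS_Λ(A, K)`. -/
def TwoWinsGSBoards (Λ K : Type*) (A : Set (ℕ → Λ)) : Prop :=
  ∃ σ : List (K → Λ) → K → Λ, ∀ q : ℕ → K → Λ, TwoFollows σ q →
    ∀ ξ : K, (fun n => q n ξ) ∉ A

/-- The multiboard Gale–Stewart game `GS_Λ(A, K)` is determined. -/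
def GSBoardsDetermined (Λ K : Type*) (A : Set (ℕ → Λ)) : Prop :=
  OneWinsGSBoards Λ K A ∨ TwoWinsGSBoards Λ K A

/-- `D(λ, κ)` : every multiboard Gale–Stewart game on `κ` boards with moves in `λ`
is determined. -/
def DProp (Λ K : Type*) : Prop :=
  ∀ A : Set (ℕ → Λ), GSBoardsDetermined Λ K A

/-! ### Laver games -/

/-- ONE wins the play `q` of the Laver game `LG(Λ, K)`. -/
def LaverWin (Λ K : Type*) (q : ℕ → K → Λ) : Prop :=
  ∀ S : Set (ℕ → Λ), ¬ TwoWinsGS S → ∃ ξ : K, (fun n => q n ξ) ∈ S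

/-- `L(λ, κ)` : ONE has a winning strategy in the Laver game `LG(Λ, K)`. -/
def OneWinsLG (Λ K : Type*) : Prop :=
  ∃ σ : List (K → Λ) → K → Λ, ∀ q : ℕ → K → Λ, OneFollows σ q → LaverWin Λ K q

/-- TWO has a winning strategy in the Laver game `LG(Λ, K)`. -/
def TwoWinsLG (Λ K : Type*) : Prop :=
  ∃ σ : List (K → Λ) → K → Λ, ∀ q : ℕ → K → Λ, TwoFollows σ q → ¬ LaverWin Λ K q

/-! ### Ulam's cut-and-choose games `UG(λ, κ)`.
White first chooses `f 0 : K → Λ`; thereafter Black chooses `(ξ (2n), f (2n+1))` and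
White responds with `(ξ (2n+1), f (2n+2))`.  White wins iff for some `α : K`,
`f n α = ξ n` for all `n`. -/

/-- A strategy for White in `UG(Λ, K)`: a first move, and a response to each finite
sequence of Black's prior moves. -/
structure UGWhiteStrategy (Λ K : Type*) where
  first : K → Λ
  move : List (Λ × (K → Λ)) → Λ × (K → Λ)

/-- White's moves in the play `(ξ, f)` of `UG(Λ, K)` follow the strategy `σ`. -/
def UGWhiteFollows {Λ K : Type*} (σ : UGWhiteStrategy Λ K) (ξ : ℕ → Λ) (f : ℕ → K → Λ) :
    Prop :=
  f 0 = σ.first ∧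
  ∀ n : ℕ, (ξ (2 * n + 1), f (2 * n + 2)) =
    σ.move (List.ofFn fun i : Fin (n + 1) => (ξ (2 * (i : ℕ)), f (2 * (i : ℕ) + 1)))

/-- `U(λ, κ)` : White has a winning strategy in the cut-and-choose game `UG(Λ, K)`. -/
def WhiteWinsUG (Λ K : Type*) : Prop :=
  ∃ σ : UGWhiteStrategy Λ K, ∀ (ξ : ℕ → Λ) (f : ℕ → K → Λ),
    UGWhiteFollows σ ξ f → ∃ α : K, ∀ n : ℕ, f n α = ξ n

/-! ### Ideals and the game `G(J)` -/

/-- `J` is an ideal of subsets: nonempty, closed under binary unions and subsets. -/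
def IsIdeal {S : Type*} (J : Set (Set S)) : Prop :=
  J.Nonempty ∧ (∀ A B : Set S, A ∈ J → B ∈ J → A ∪ B ∈ J) ∧
    ∀ A B : Set S, B ∈ J → A ⊆ B → A ∈ J

/-- `J` is atomless: every `J`-positive set splits into two disjoint `J`-positive sets. -/
def IsAtomless {S : Type*} (J : Set (Set S)) : Prop :=
  ∀ X : Set S, X ∉ J → ∃ A B : Set S, A ∪ B = X ∧ Disjoint A B ∧ A ∉ J ∧ B ∉ J

/-- Legality of White's `n`-th move in the game `G(J)` (White plays `W n`,
Black plays `B n`). -/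
def GJWhiteLegal {S : Type*} (J : Set (Set S)) (W B : ℕ → Set S) : ℕ → Prop
  | 0 => W 0 ∉ J
  | n + 1 => W (n + 1) ∉ J ∧ W (n + 1) ⊆ B n

/-- Legality of Black's `n`-th move in the game `G(J)`. -/
def GJBlackLegal {S : Type*} (J : Set (Set S)) (W B : ℕ → Set S) (n : ℕ) : Prop :=
  B n ∉ J ∧ B n ⊆ W n

/-- Black has a winning strategy in the game `G(J)`: a strategy `τ` such that in any
play in which Black follows `τ`, Black's moves are legal as long as White's have been,
and if White always moves legally then `⋂ n, B n` is nonempty. -/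
def BlackWinsGJ {S : Type*} (J : Set (Set S)) : Prop :=
  ∃ τ : List (Set S) → Set S,
    ∀ W B : ℕ → Set S,
      (∀ n : ℕ, B n = τ (List.ofFn fun i : Fin (n + 1) => W (i : ℕ))) →
      (∀ n : ℕ, (∀ k ≤ n, GJWhiteLegal J W B k) → GJBlackLegal J W B n) ∧
      ((∀ n : ℕ, GJWhiteLegal J W B n) → (⋂ n, B n).Nonempty)

/-- The ideal `J` on `K` witnesses `I(λ, κ)`: it is a proper free ideal, `λ⁺`-complete,
every positive set has a partition into `λ` many disjoint positive sets, and there is a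
dense family in `J⁺` closed under countable descending intersections (nonempty). -/
def IdealWitness (Λ K : Type*) (J : Set (Set K)) : Prop :=
  IsIdeal J ∧ J ≠ Set.univ ∧ ⋃₀ J = Set.univ ∧
  (∀ A : Λ → Set K, (∀ i, A i ∈ J) → (⋃ i, A i) ∈ J) ∧
  (∀ X : Set K, X ∉ J → ∃ P : Λ → Set K, (⋃ i, P i) = X ∧
      (∀ i j : Λ, i ≠ j → Disjoint (P i) (P j)) ∧ ∀ i, P i ∉ J) ∧
  ∃ F : Set (Set K), (∀ Y ∈ F, Y ∉ J) ∧ (∀ X : Set K, X ∉ J → ∃ Y ∈ F, Y ⊆ X) ∧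
    ∀ Xs : ℕ → Set K, (∀ n, Xs n ∈ F) → (∀ n, Xs (n + 1) ⊆ Xs n) → (⋂ n, Xs n).Nonempty

/-- `I(λ, κ)` : some ideal on `K` witnesses the above. -/
def IProp (Λ K : Type*) : Prop := ∃ J : Set (Set K), IdealWitness Λ K J

/-! ### The Banach–Mazur game and box products -/

/-- Legality of White's `n`-th move in the Banach–Mazur game (White plays the sets of
even index of the play `p`). -/
def BMWhiteLegal {X : Type*} [TopologicalSpace X] (p : ℕ → Set X) : ℕ → Prop
  | 0 => IsOpen (p 0) ∧ (p 0).Nonempty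
  | n + 1 => IsOpen (p (2 * n + 2)) ∧ (p (2 * n + 2)).Nonempty ∧ p (2 * n + 2) ⊆ p (2 * n + 1)

/-- Legality of Black's `n`-th move in the Banach–Mazur game. -/
def BMBlackLegal {X : Type*} [TopologicalSpace X] (p : ℕ → Set X) (n : ℕ) : Prop :=
  IsOpen (p (2 * n + 1)) ∧ (p (2 * n + 1)).Nonempty ∧ p (2 * n + 1) ⊆ p (2 * n)

/-- Black has a winning strategy in the Banach–Mazur game `BM(X)`: a strategy `τ` such
that in any play where Black follows `τ`, Black's moves are legal as long as White's
have been, and if White always moves legally then the intersection of the play is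
nonempty. -/
def BlackWinsBM (X : Type*) [TopologicalSpace X] : Prop :=
  ∃ τ : List (Set X) → Set X,
    ∀ p : ℕ → Set X,
      (∀ n : ℕ, p (2 * n + 1) = τ (List.ofFn fun i : Fin (n + 1) => p (2 * (i : ℕ)))) →
      (∀ n : ℕ, (∀ k ≤ n, BMWhiteLegal p k) → BMBlackLegal p n) ∧
      ((∀ n : ℕ, BMWhiteLegal p n) → (⋂ n, p n).Nonempty)

/-- The box product topology on `ι → X`: generated by boxes `∏ i, U i` with all
`U i` open. -/
def boxTopology (ι X : Type*) [TopologicalSpace X] : TopologicalSpace (ι → X) :=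
  TopologicalSpace.generateFrom
    {S : Set (ι → X) | ∃ U : ι → Set X, (∀ i, IsOpen (U i)) ∧ S = Set.pi Set.univ U}

/-- `𝓑` is a π-base for `X`: a family of nonempty open sets such that every nonempty
open set contains a member of the family. -/
def IsPiBase (X : Type*) [TopologicalSpace X] (𝓑 : Set (Set X)) : Prop :=
  (∀ V ∈ 𝓑, IsOpen V ∧ V.Nonempty) ∧
    ∀ U : Set X, IsOpen U → U.Nonempty → ∃ V ∈ 𝓑, V ⊆ U

/-! ### Interlaced sets -/

/-- `A` and `B` are interlaced: both are infinite and for some `k` the increasing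
enumerations of `A \ k` and `B \ k` satisfy `a₀ < b₀ < a₁ < b₁ < ⋯`. -/
def Interlaced (A B : Set ℕ) : Prop :=
  A.Infinite ∧ B.Infinite ∧ ∃ k : ℕ, ∀ n : ℕ,
    Nat.nth (fun m => m ∈ A ∧ k ≤ m) n < Nat.nth (fun m => m ∈ B ∧ k ≤ m) n ∧
    Nat.nth (fun m => m ∈ B ∧ k ≤ m) n < Nat.nth (fun m => m ∈ A ∧ k ≤ m) (n + 1)

/-- `B(x) = {x(2n) + x(2n+1) : n < ω, x(2n) > 0}`. -/
def Bx (x : ℕ → ℕ) : Set ℕ :=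
  {m | ∃ n : ℕ, 0 < x (2 * n) ∧ m = x (2 * n) + x (2 * n + 1)}

/-- `Y(𝓑) = {x ∈ ωω : B(x) ∉ 𝓑}`. -/
def YFam (𝓑 : Set (Set ℕ)) : Set (ℕ → ℕ) := {x | Bx x ∉ 𝓑}

/-- `B^F_i = {F(2n)(i) + F(2n+1)(i) : n < ω, F(2n)(i) > 0}` for a play `F` of `G^ω`. -/
def BF (F : ℕ → ℕ → ℕ) (i : ℕ) : Set ℕ :=
  {m | ∃ n : ℕ, 0 < F (2 * n) i ∧ m = F (2 * n) i + F (2 * n + 1) i}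

/-- `D(A,B)` : `A` or `B` is finite, or for each `k` there are `a₁ < a₂ < a₃` in `A \ k`
with no element of `B` strictly between `a₁` and `a₃`. -/
def DRel (A B : Set ℕ) : Prop :=
  A.Finite ∨ B.Finite ∨ ∀ k : ℕ, ∃ a₁ a₂ a₃ : ℕ,
    a₁ ∈ A ∧ a₂ ∈ A ∧ a₃ ∈ A ∧ k ≤ a₁ ∧ a₁ < a₂ ∧ a₂ < a₃ ∧
    ¬ ∃ b ∈ B, a₁ < b ∧ b < a₃

/-!
White keeps a `J`-positive set `Xₙ`, starting with `X₀ = K`. She cuts with a function all of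
whose fibres on `Xₙ` are positive (a partition of `Xₙ` into `λ` positive pieces gives one), so
Black's colour `ξ₂ₙ` leaves a positive set `Y`. By `λ⁺`-completeness some fibre of Black's cut
`f₂ₙ₊₁` on `Y` is positive; White names its colour `ξ₂ₙ₊₁` and shrinks the fibre to a member
`Xₙ₊₁` of the dense family `F`. The sets `Xₙ₊₁` descend in `F`, so they share a point `α`, and
`α` lies in every fibre chosen during the play.
-/

section StateStrategy

variable {Λ K S : Type*} (s₀ : S) (cut : S → K → Λ) (answer : S → Λ × (K → Λ) → Λ)
  (update : S → Λ × (K → Λ) → S)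

def stateAfter (l : List (Λ × (K → Λ))) : S := l.foldl update s₀

/-- White answers Black's last move from the state before it, then cuts according to the
updated state; the `Classical.arbitrary` branch is never reached in a play. -/
noncomputable def stateStrategy [Nonempty Λ] : UGWhiteStrategy Λ K where
  first := cut s₀
  move l := (l.getLast?.elim (Classical.arbitrary Λ) (answer (stateAfter s₀ update l.dropLast)),
    cut (stateAfter s₀ update l))

theorem stateAfter_concat (l : List (Λ × (K → Λ))) (b : Λ × (K → Λ)) :
    stateAfter s₀ update (l ++ [b]) = update (stateAfter s₀ update l) b :=
  List.foldl_concat ..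

def playStates (ξ : ℕ → Λ) (f : ℕ → K → Λ) : ℕ → S
  | 0 => s₀
  | n + 1 => update (playStates ξ f n) (ξ (2 * n), f (2 * n + 1))

theorem stateAfter_ofFn (ξ : ℕ → Λ) (f : ℕ → K → Λ) (n : ℕ) :
    stateAfter s₀ update (List.ofFn fun i : Fin n => (ξ (2 * (i : ℕ)), f (2 * (i : ℕ) + 1))) =
      playStates s₀ update ξ f n := by
  induction n with
  | zero => rfl
  | succ n ih =>
    simp only [List.ofFn_succ', List.concat_eq_append, stateAfter_concat, Fin.val_castSucc,
      Fin.val_last, ih, playStates]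

theorem UGWhiteFollows.of_stateStrategy [Nonempty Λ] {ξ : ℕ → Λ} {f : ℕ → K → Λ}
    (h : UGWhiteFollows (stateStrategy s₀ cut answer update) ξ f) :
    (∀ n, f (2 * n) = cut (playStates s₀ update ξ f n)) ∧
      ∀ n, ξ (2 * n + 1) = answer (playStates s₀ update ξ f n) (ξ (2 * n), f (2 * n + 1)) := by
  have hmove := h.2
  simp only [stateStrategy, List.ofFn_succ', List.concat_eq_append, List.dropLast_concat,
    List.getLast?_concat, Option.elim_some, Prod.mk.injEq, Fin.val_castSucc, Fin.val_last,
    stateAfter_concat, stateAfter_ofFn] at hmove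
  refine ⟨fun n => ?_, fun n => (hmove n).1⟩
  cases n with
  | zero => exact h.1
  | succ n => exact (hmove n).2

end StateStrategy

theorem exists_forall_eq_of_subset_preimage {Λ K : Type*} {ξ : ℕ → Λ} {f : ℕ → K → Λ}
    (s : ℕ → Set K)
    (hs : ∀ n, s n ⊆ f (2 * n) ⁻¹' {ξ (2 * n)} ∩ f (2 * n + 1) ⁻¹' {ξ (2 * n + 1)})
    (hne : (⋂ n, s n).Nonempty) : ∃ α, ∀ n, f n α = ξ n := by
  obtain ⟨α, hα⟩ := hne
  have hαs := mem_iInter.1 hα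
  refine ⟨α, fun m => ?_⟩
  obtain ⟨n, rfl | rfl⟩ := Nat.even_or_odd' m
  · exact (hs n (hαs n)).1
  · exact (hs n (hαs n)).2

theorem exists_subset_preimage_singleton_of_pairwise_disjoint {Λ K : Type*} [Nonempty Λ]
    {P : Λ → Set K} (hP : ∀ i j, i ≠ j → Disjoint (P i) (P j)) :
    ∃ g : K → Λ, ∀ i, P i ⊆ g ⁻¹' {i} := by
  classical
  refine ⟨fun k => if h : ∃ i, k ∈ P i then h.choose else Classical.arbitrary Λ, fun i k hk => ?_⟩
  have h : ∃ i, k ∈ P i := ⟨i, hk⟩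
  simp only [mem_preimage, mem_singleton_iff, dif_pos h]
  by_contra hne
  exact disjoint_left.1 (hP _ _ hne) h.choose_spec hk

namespace IsIdeal

variable {K : Type*} {J : Set (Set K)}

theorem empty_mem (hJ : IsIdeal J) : ∅ ∈ J :=
  let ⟨A, hA⟩ := hJ.1
  hJ.2.2 ∅ A hA (empty_subset A)

theorem not_mem_of_subset (hJ : IsIdeal J) {A B : Set K} (hAB : A ⊆ B) (hA : A ∉ J) : B ∉ J :=
  fun hB => hA (hJ.2.2 A B hB hAB)

theorem univ_not_mem (hJ : IsIdeal J) (hproper : J ≠ Set.univ) : Set.univ ∉ J :=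
  fun h => hproper (eq_univ_of_forall fun A => hJ.2.2 A Set.univ h (subset_univ A))

theorem exists_inter_preimage_not_mem {Λ : Type*} (hJ : IsIdeal J)
    (hcomp : ∀ A : Λ → Set K, (∀ i, A i ∈ J) → (⋃ i, A i) ∈ J) {X : Set K} (hX : X ∉ J)
    (g : K → Λ) : ∃ ζ, X ∩ g ⁻¹' {ζ} ∉ J := by
  by_contra! h
  have hcover : X ⊆ ⋃ ζ, X ∩ g ⁻¹' {ζ} := fun k hk => mem_iUnion.2 ⟨g k, hk, rfl⟩
  exact hJ.not_mem_of_subset hcover hX (hcomp _ h)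

end IsIdeal

theorem whiteWinsUG_of_positive_sets {Λ K : Type*} [Nonempty Λ] {J F : Set (Set K)}
    (huniv : Set.univ ∉ J)
    (hsplit : ∀ X, X ∉ J → ∃ g : K → Λ, ∀ i, X ∩ g ⁻¹' {i} ∉ J)
    (hfiber : ∀ X, X ∉ J → ∀ g : K → Λ, ∃ ζ, X ∩ g ⁻¹' {ζ} ∉ J)
    (hFpos : ∀ Y ∈ F, Y ∉ J) (hFdense : ∀ X, X ∉ J → ∃ Y ∈ F, Y ⊆ X)
    (hFdesc : ∀ Xs : ℕ → Set K, (∀ n, Xs n ∈ F) → (∀ n, Xs (n + 1) ⊆ Xs n) →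
      (⋂ n, Xs n).Nonempty) :
    WhiteWinsUG Λ K := by
  let Pos := {X : Set K // X ∉ J}
  choose cut hcut using fun X : Pos => hsplit X.1 X.2
  choose pick hpick using fun X : Pos => hfiber X.1 X.2
  choose shrink hshrinkF hshrink using fun X : Pos => hFdense X.1 X.2
  let chosen (X : Pos) (b : Λ × (K → Λ)) : Pos := ⟨X.1 ∩ cut X ⁻¹' {b.1}, hcut X b.1⟩
  let answer (X : Pos) (b : Λ × (K → Λ)) : Λ := pick (chosen X b) b.2
  let update (X : Pos) (b : Λ × (K → Λ)) : Pos :=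
    ⟨shrink ⟨(chosen X b).1 ∩ b.2 ⁻¹' {answer X b}, hpick _ _⟩, hFpos _ (hshrinkF _)⟩
  refine ⟨stateStrategy ⟨Set.univ, huniv⟩ cut answer update, fun ξ f hfollow => ?_⟩
  obtain ⟨hf, hξ⟩ := hfollow.of_stateStrategy
  set X := playStates ⟨Set.univ, huniv⟩ update ξ f
  have hX : ∀ n, (X (n + 1)).1 ∈ F ∧ (X (n + 1)).1 ⊆
      (X n).1 ∩ f (2 * n) ⁻¹' {ξ (2 * n)} ∩ f (2 * n + 1) ⁻¹' {ξ (2 * n + 1)} := by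
    intro n
    rw [hf n, hξ n]
    exact ⟨hshrinkF _, hshrink _⟩
  refine exists_forall_eq_of_subset_preimage (fun n => (X (n + 1)).1)
    (fun n => (hX n).2.trans ?_) (hFdesc _ (fun n => (hX n).1) fun n => (hX (n + 1)).2.trans ?_)
  · exact fun k hk => ⟨hk.1.2, hk.2⟩
  · exact fun k hk => hk.1.1

theorem statement_11_general (Λ K : Type u)
    (hI : IProp Λ K) : WhiteWinsUG Λ K := by
  obtain ⟨J, hJ, hproper, -, hcomp, hpart, F, hFpos, hFdense, hFdesc⟩ := hI
  have huniv := hJ.univ_not_mem hproper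
  have : Nonempty Λ := by
    obtain ⟨P, hP, -, -⟩ := hpart _ huniv
    by_contra hΛ
    rw [not_nonempty_iff] at hΛ
    exact huniv (by rw [← hP, iUnion_of_empty]; exact hJ.empty_mem)
  have hsplit : ∀ X, X ∉ J → ∃ g : K → Λ, ∀ i, X ∩ g ⁻¹' {i} ∉ J := by
    intro X hX
    obtain ⟨P, hPX, hdisj, hP⟩ := hpart X hX
    obtain ⟨g, hg⟩ := exists_subset_preimage_singleton_of_pairwise_disjoint hdisj
    exact ⟨g, fun i =>
      hJ.not_mem_of_subset (subset_inter (hPX ▸ subset_iUnion P i) (hg i)) (hP i)⟩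
  exact whiteWinsUG_of_positive_sets huniv hsplit
    (fun X hX => hJ.exists_inter_preimage_not_mem hcomp hX) hFpos hFdense hFdesc

/-- Theorem (Laver, paper Thm 19): for infinite cardinals `λ` and `κ`, `I(λ,κ)`
implies `U(λ,κ)`. -/
theorem statement_11 (Λ K : Type u) [Infinite Λ] [Infinite K]
    (hI : IProp Λ K) : WhiteWinsUG Λ K :=
  statement_11_general Λ K hI

end GamePaper
end

section
/- Let 0 < κ ≤ ℵ0 be a cardinal number. There is a set A_κ ⊆ ω2 (a set of functions ω → {0,1}) such that the game GS_2(A_κ,n) is undetermined for every n with 0 < n < κ, while ONE has a winning strategy in GS_2(A_κ,κ). -/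
open Cardinal Set

namespace GamePaper

universe u

/-!
ONE wins on a countable set `K` of boards with a coding strategy: on every board it writes the
name of the board and, dovetailed, every move TWO has made on every board, so different boards or
different plays against it give different columns. Hence it suffices that `A` meets the set of
columns of each such play. `A` is built by a Bernstein-type diagonalisation of length `𝔠` over all
strategies in games on `n < #K` boards: a strategy of ONE is defeated by a play in which TWO
repeats one sequence on every board and all `n` columns are kept out of `A`, a strategy of TWO by
a play in which ONE repeats one sequence and the first column is put into `A`. Each step commits
only countably many points, so `𝔠` candidate plays always remain; when a column of a play against
the coding strategy is kept out, another of its columns is committed to `A`, which is possible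
because fewer than `#K` columns are excluded in one step.
-/

open Function

section TransfiniteConstruction

variable {α I : Type u} [LinearOrder I] [WellFoundedLT I]
  (Good : Set α → Prop) (Sat : I → Set α → Prop)

open scoped Classical in
/-- Only the countable increments are recorded, so that every stage is a union of fewer than `c`
countable sets and has size `< c` without any assumption on the cofinality of `c`. -/
noncomputable def stageIncrement : I → Set α :=
  wellFounded_lt.fix fun i earlier =>
    if h : ∃ D : Set α, D.Countable ∧ Good ((⋃ j : Iio i, earlier j j.2) ∪ D) ∧
        Sat i ((⋃ j : Iio i, earlier j j.2) ∪ D) then h.choose else ∅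

noncomputable def stagesBelow (i : I) : Set α := ⋃ j : Iio i, stageIncrement Good Sat j

noncomputable def stagesUpTo (i : I) : Set α := stagesBelow Good Sat i ∪ stageIncrement Good Sat i

variable {Good Sat}

open scoped Classical in
lemma stageIncrement_eq (i : I) :
    stageIncrement Good Sat i =
      if h : ∃ D : Set α, D.Countable ∧ Good (stagesBelow Good Sat i ∪ D) ∧
          Sat i (stagesBelow Good Sat i ∪ D) then h.choose else ∅ :=
  wellFounded_lt.fix_eq _ i

lemma countable_stageIncrement (i : I) : (stageIncrement Good Sat i).Countable := by
  rw [stageIncrement_eq]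
  split_ifs with h
  exacts [h.choose_spec.1, countable_empty]

lemma stagesUpTo_subset_stagesBelow {i j : I} (hij : i < j) :
    stagesUpTo Good Sat i ⊆ stagesBelow Good Sat j :=
  union_subset (iUnion_subset fun k => subset_iUnion_of_subset ⟨k, k.2.trans hij⟩ subset_rfl)
    (subset_iUnion_of_subset ⟨i, hij⟩ subset_rfl)

lemma monotone_stagesUpTo : Monotone (stagesUpTo Good Sat : I → Set α) := by
  intro i j hij
  rcases hij.lt_or_eq with hij | rfl
  · exact (stagesUpTo_subset_stagesBelow hij).trans subset_union_left
  · exact subset_rfl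

lemma stagesBelow_eq_sUnion (i : I) :
    stagesBelow Good Sat i = ⋃₀ range fun j : Iio i => stagesUpTo Good Sat j := by
  rw [sUnion_range]
  exact subset_antisymm (iUnion_mono fun j => subset_union_right)
    (iUnion_subset fun j => stagesUpTo_subset_stagesBelow j.2)

lemma mk_stagesBelow_lt {c : Cardinal.{u}} (hc : ℵ₀ < c) {i : I} (hi : #(Iio i) < c) :
    #(stagesBelow Good Sat i) < c := by
  refine (mk_iUnion_le _).trans_lt (mul_lt_of_lt hc.le hi ((ciSup_le' fun j => ?_).trans_lt hc))
  exact mk_le_aleph0_iff.mpr (countable_stageIncrement (j : I)).to_subtype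

lemma good_and_sat_stagesUpTo {c : Cardinal.{u}} (hc : ℵ₀ < c) (hI : ∀ i : I, #(Iio i) < c)
    (good_sUnion : ∀ S : Set (Set α), IsChain (· ⊆ ·) S → (∀ s ∈ S, Good s) → Good (⋃₀ S))
    (extend : ∀ i s, Good s → #s < c → ∃ D : Set α, D.Countable ∧ Good (s ∪ D) ∧ Sat i (s ∪ D))
    (i : I) : Good (stagesUpTo Good Sat i) ∧ Sat i (stagesUpTo Good Sat i) := by
  induction i using WellFoundedLT.induction with
  | _ i ih =>
    have hbelow : Good (stagesBelow Good Sat i) := by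
      rw [stagesBelow_eq_sUnion]
      refine good_sUnion _ (monotone_stagesUpTo.comp (Subtype.mono_coe _)).isChain_range ?_
      rintro _ ⟨j, rfl⟩
      exact (ih j j.2).1
    have hext := extend i _ hbelow (mk_stagesBelow_lt hc (hI i))
    rw [stagesUpTo, stageIncrement_eq, dif_pos hext]
    exact hext.choose_spec.2

theorem exists_good_forall_sat_of_wellFoundedLT {c : Cardinal.{u}} (hc : ℵ₀ < c)
    (hI : ∀ i : I, #(Iio i) < c)
    (good_sUnion : ∀ S : Set (Set α), IsChain (· ⊆ ·) S → (∀ s ∈ S, Good s) → Good (⋃₀ S))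
    (sat_mono : ∀ i, Monotone (Sat i))
    (extend : ∀ i s, Good s → #s < c → ∃ D : Set α, D.Countable ∧ Good (s ∪ D) ∧ Sat i (s ∪ D)) :
    ∃ s, Good s ∧ ∀ i, Sat i s := by
  have hstage := good_and_sat_stagesUpTo hc hI good_sUnion extend
  refine ⟨⋃₀ range (stagesUpTo Good Sat), good_sUnion _ monotone_stagesUpTo.isChain_range ?_,
    fun i => sat_mono i (subset_sUnion_of_mem (mem_range_self i)) (hstage i).2⟩
  rintro _ ⟨i, rfl⟩
  exact (hstage i).1

end TransfiniteConstruction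

theorem exists_good_forall_sat {α T : Type u} {Good : Set α → Prop} {Sat : T → Set α → Prop}
    {c : Cardinal.{u}} (hc : ℵ₀ < c) (hT : #T ≤ c)
    (good_sUnion : ∀ S : Set (Set α), IsChain (· ⊆ ·) S → (∀ s ∈ S, Good s) → Good (⋃₀ S))
    (sat_mono : ∀ t, Monotone (Sat t))
    (extend : ∀ t s, Good s → #s < c → ∃ D : Set α, D.Countable ∧ Good (s ∪ D) ∧ Sat t (s ∪ D)) :
    ∃ s, Good s ∧ ∀ t, Sat t s := by
  obtain ⟨f⟩ : Nonempty ((#T).ord.ToType ≃ T) := Cardinal.eq.mp (by simp)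
  obtain ⟨s, hs, hsat⟩ := exists_good_forall_sat_of_wellFoundedLT (Sat := fun i => Sat (f i)) hc
    (fun i => (mk_Iio_lt i (by simp)).trans_le (by simpa using hT)) good_sUnion
    (fun i => sat_mono (f i)) (fun i => extend (f i))
  exact ⟨s, hs, fun t => by simpa using hsat (f.symm t)⟩

theorem exists_apply_notMem_of_mk_lt {Y X : Type u} {f : Y → X} (hf : Injective f) {S : Set X}
    (hS : #S < #Y) : ∃ y, f y ∉ S := by
  by_contra! h
  exact (mk_le_of_injective (f := fun y => (⟨f y, h y⟩ : S)) fun y y' hyy' =>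
    hf (congrArg Subtype.val hyy')).not_gt hS

theorem exists_forall_apply_notMem {ι Y X : Type u} [Countable ι] {q : Y → ι → X}
    (hq : ∀ i, Injective fun y => q y i) {S : Set X} (hY : ℵ₀ < #Y) (hS : #S < #Y) :
    ∃ y, ∀ i, q y i ∉ S := by
  by_contra! h
  choose i hi using h
  have hinj : Injective fun y => ((i y, ⟨q y (i y), hi y⟩) : ι × S) := by
    intro y y' hyy'
    obtain ⟨hii, hqq⟩ := Prod.ext_iff.mp hyy'
    have hqq := congrArg Subtype.val hqq
    simp only at hii hqq
    rw [← hii] at hqq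
    exact hq (i y) hqq
  have hlt : #(ι × S) < #Y := by
    rw [mk_prod, lift_id, lift_id]
    exact mul_lt_of_lt hY.le ((mk_le_aleph0_iff.mpr ‹_›).trans_lt hY) hS
  exact (mk_le_of_injective hinj).not_gt hlt

section Diagonalization

variable {X W K : Type u} (C : W → K → X)

/-- `Sum.inl x ∈ s` commits `x` to the set under construction, `Sum.inr x ∈ s` to its complement. -/
def IsAdmissible (s : Set (X ⊕ X)) : Prop :=
  (∀ x, Sum.inl x ∈ s → Sum.inr x ∉ s) ∧
    ∀ w, (∃ ξ, Sum.inr (C w ξ) ∈ s) → ∃ ξ, Sum.inl (C w ξ) ∈ s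

variable {C}

theorem isAdmissible_sUnion {S : Set (Set (X ⊕ X))} (hS : IsChain (· ⊆ ·) S)
    (h : ∀ s ∈ S, IsAdmissible C s) : IsAdmissible C (⋃₀ S) := by
  refine ⟨?_, ?_⟩
  · rintro x ⟨s, hs, hxs⟩ ⟨s', hs', hxs'⟩
    rcases hS.total hs hs' with hss' | hs's
    · exact (h s' hs').1 x (hss' hxs) hxs'
    · exact (h s hs).1 x hxs (hs's hxs')
  · rintro w ⟨ξ, s, hs, hξ⟩
    obtain ⟨ξ', hξ'⟩ := (h s hs).2 w ⟨ξ, hξ⟩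
    exact ⟨ξ', subset_sUnion_of_mem hs hξ'⟩

theorem IsAdmissible.exists_extend_mem {s : Set (X ⊕ X)} (hs : IsAdmissible C s) {Y : Type u}
    {p : Y → X} (hp : Injective p) (hsY : #s < #Y) :
    ∃ D : Set (X ⊕ X), D.Countable ∧ IsAdmissible C (s ∪ D) ∧ ∃ y, Sum.inl (p y) ∈ s ∪ D := by
  obtain ⟨y, hy⟩ := exists_apply_notMem_of_mk_lt (Sum.inr_injective.comp hp) hsY
  refine ⟨{Sum.inl (p y)}, countable_singleton _, ⟨?_, ?_⟩, y, by simp⟩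
  · rintro x (hx | hx) (hx' | hx')
    · exact hs.1 x hx hx'
    · simp at hx'
    · simp only [mem_singleton_iff, Sum.inl.injEq] at hx
      subst hx
      exact hy hx'
    · simp at hx'
  · rintro w ⟨ξ, hξ | hξ⟩
    · obtain ⟨ξ', hξ'⟩ := hs.2 w ⟨ξ, hξ⟩
      exact ⟨ξ', Or.inl hξ'⟩
    · simp at hξ

theorem IsAdmissible.exists_extend_notMem {s : Set (X ⊕ X)} (hs : IsAdmissible C s)
    (hC : Injective (uncurry C)) {Y B : Type u} [Countable B] (hB : #B < #K)
    {q : Y → B → X} (hq : ∀ b, Injective fun y => q y b) (hY : ℵ₀ < #Y) (hsY : #s < #Y) :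
    ∃ D : Set (X ⊕ X), D.Countable ∧ IsAdmissible C (s ∪ D) ∧
      ∃ y, ∀ b, Sum.inr (q y b) ∈ s ∪ D := by
  obtain ⟨y, hy⟩ := exists_forall_apply_notMem (fun b => Sum.inl_injective.comp (hq b)) hY hsY
  set F := range (q y)
  set hit := uncurry C ⁻¹' F
  have hfree : ∀ wξ : hit, ∃ ξ', Sum.inr (C wξ.1.1 ξ') ∉ s ∧ C wξ.1.1 ξ' ∉ F := by
    intro ⟨⟨w, _⟩, _⟩
    by_cases hP : ∃ ξ', Sum.inl (C w ξ') ∈ s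
    · obtain ⟨ξ', hξ'⟩ := hP
      refine ⟨ξ', hs.1 _ hξ', ?_⟩
      rintro ⟨b, hb⟩
      exact hy b (by simpa only [comp_apply, hb] using hξ')
    · obtain ⟨ξ', hξ'⟩ := exists_apply_notMem_of_mk_lt (hC.comp (Prod.mk_right_injective w))
        ((mk_range_le).trans_lt hB)
      exact ⟨ξ', fun h => hP (hs.2 w ⟨ξ', h⟩), hξ'⟩
  choose g hg using hfree
  have : Countable hit := ((countable_range _).preimage hC).to_subtype
  refine ⟨Sum.inr '' F ∪ range fun wξ : hit => Sum.inl (C wξ.1.1 (g wξ)),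
    ((countable_range _).image _).union (countable_range _), ⟨?_, ?_⟩, y, fun b => ?_⟩
  · intro x hx hx'
    simp only [mem_union, mem_image, mem_range, Sum.inl.injEq, Sum.inr.injEq, reduceCtorEq,
      and_false, exists_false, false_or, or_false] at hx hx'
    rcases hx with hx | ⟨wξ, rfl⟩
    · rcases hx' with hx' | ⟨_, ⟨b, rfl⟩, rfl⟩
      · exact hs.1 x hx hx'
      · exact hy b hx
    · rcases hx' with hx' | ⟨_, hF, rfl⟩
      · exact (hg wξ).1 hx'
      · exact (hg wξ).2 hF
  · rintro w ⟨ξ, hξ⟩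
    simp only [mem_union, mem_image, Sum.inr.injEq, mem_range, reduceCtorEq, exists_false,
      or_false, exists_eq_right] at hξ
    rcases hξ with hξ | hF
    · obtain ⟨ξ', hξ'⟩ := hs.2 w ⟨ξ, hξ⟩
      exact ⟨ξ', Or.inl hξ'⟩
    · exact ⟨g ⟨(w, ξ), hF⟩, Or.inr (Or.inr ⟨⟨(w, ξ), hF⟩, rfl⟩)⟩
  · exact Or.inr (Or.inl (mem_image_of_mem _ (mem_range_self b)))

end Diagonalization

theorem exists_set_meets_and_avoids {X Y W K T₁ T₂ : Type u} [Nonempty K] (B : T₂ → Type u)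
    [∀ t, Countable (B t)] (hY : ℵ₀ < #Y) (hT₁ : #T₁ ≤ #Y) (hT₂ : #T₂ ≤ #Y)
    {C : W → K → X} (hC : Injective (uncurry C))
    {p : T₁ → Y → X} (hp : ∀ t, Injective (p t))
    (hB : ∀ t, #(B t) < #K) {q : (t : T₂) → Y → B t → X} (hq : ∀ t b, Injective fun y => q t y b) :
    ∃ A : Set X, (∀ w, ∃ ξ, C w ξ ∈ A) ∧ (∀ t, ∃ y, p t y ∈ A) ∧ ∀ t, ∃ y, ∀ b, q t y b ∉ A := by
  obtain ⟨s, hs, hsat⟩ := exists_good_forall_sat (Good := IsAdmissible C)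
    (Sat := Sum.elim (fun t s => ∃ y, Sum.inl (p t y) ∈ s)
      (fun t s => ∃ y, ∀ b, Sum.inr (q t y b) ∈ s))
    hY (by simpa using add_le_of_le hY.le hT₁ hT₂) (fun S => isAdmissible_sUnion)
    (by
      rintro (t | t) s s' hss' ⟨y, hy⟩
      exacts [⟨y, hss' hy⟩, ⟨y, fun b => hss' (hy b)⟩])
    (by
      rintro (t | t) s hs hsY
      exacts [hs.exists_extend_mem (hp t) hsY, hs.exists_extend_notMem hC (hB t) (hq t) hY hsY])
  refine ⟨{x | Sum.inr x ∉ s}, fun w => ?_, fun t => ?_, fun t => ?_⟩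
  · by_cases hw : ∃ ξ, Sum.inr (C w ξ) ∈ s
    · obtain ⟨ξ, hξ⟩ := hs.2 w hw
      exact ⟨ξ, hs.1 _ hξ⟩
    · exact ⟨Classical.arbitrary K, fun h => hw ⟨_, h⟩⟩
  · obtain ⟨y, hy⟩ := hsat (Sum.inl t)
    exact ⟨y, hs.1 _ hy⟩
  · obtain ⟨y, hy⟩ := hsat (Sum.inr t)
    exact ⟨y, fun b hb => hb (hy b)⟩

section Plays

variable {M : Type*}

def playOne (σ : List M → M) (w : ℕ → M) : ℕ → M :=
  Stream'.interleave (fun k => σ (List.ofFn fun i : Fin k => w i)) w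

def playTwo (τ : List M → M) (z : ℕ → M) : ℕ → M :=
  Stream'.interleave z fun k => τ (List.ofFn fun i : Fin (k + 1) => z i)

@[simp]
lemma playOne_two_mul (σ : List M → M) (w : ℕ → M) (k : ℕ) :
    playOne σ w (2 * k) = σ (List.ofFn fun i : Fin k => w i) :=
  Stream'.get_interleave_left k _ _

@[simp]
lemma playOne_two_mul_add_one (σ : List M → M) (w : ℕ → M) (k : ℕ) :
    playOne σ w (2 * k + 1) = w k :=
  Stream'.get_interleave_right k _ _

@[simp]
lemma playTwo_two_mul (τ : List M → M) (z : ℕ → M) (k : ℕ) : playTwo τ z (2 * k) = z k :=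
  Stream'.get_interleave_left k _ _

@[simp]
lemma playTwo_two_mul_add_one (τ : List M → M) (z : ℕ → M) (k : ℕ) :
    playTwo τ z (2 * k + 1) = τ (List.ofFn fun i : Fin (k + 1) => z i) :=
  Stream'.get_interleave_right k _ _

lemma oneFollows_playOne (σ : List M → M) (w : ℕ → M) : OneFollows σ (playOne σ w) := by
  intro k
  simp

lemma twoFollows_playTwo (τ : List M → M) (z : ℕ → M) : TwoFollows τ (playTwo τ z) := by
  intro k
  simp

lemma OneFollows.eq_playOne {σ : List M → M} {p : ℕ → M} (h : OneFollows σ p) :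
    p = playOne σ fun k => p (2 * k + 1) := by
  funext m
  obtain ⟨k, rfl | rfl⟩ := Nat.even_or_odd' m
  · rw [h k, playOne_two_mul]
  · rw [playOne_two_mul_add_one]

end Plays

section Boards

variable {Λ K : Type*}

lemma injective_column_playOne_const (σ : List (K → Λ) → K → Λ) (ξ : K) :
    Injective fun (y : ℕ → Λ) m => playOne σ (fun k _ => y k) m ξ := by
  intro y y' h
  funext k
  simpa using congrFun h (2 * k + 1)

lemma injective_column_playTwo_const (τ : List (K → Λ) → K → Λ) (ξ : K) :
    Injective fun (z : ℕ → Λ) m => playTwo τ (fun k _ => z k) m ξ := by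
  intro z z' h
  funext k
  simpa using congrFun h (2 * k)

lemma OneWinsGSBoards.of_equiv {K' : Type*} {A : Set (ℕ → Λ)} (f : K' ≃ K)
    (h : OneWinsGSBoards Λ K A) : OneWinsGSBoards Λ K' A := by
  obtain ⟨σ, hσ⟩ := h
  refine ⟨fun l ξ => σ (l.map (· ∘ f.symm)) (f ξ), fun q hq => ?_⟩
  have hq' : OneFollows σ fun n ξ => q n (f.symm ξ) := by
    intro n
    funext ξ
    simpa [List.map_ofFn, comp_def] using congrFun (hq n) (f.symm ξ)
  obtain ⟨ξ, hξ⟩ := hσ _ hq'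
  exact ⟨f.symm ξ, hξ⟩

end Boards

section CodingStrategy

variable {K : Type*} (e : K → ℕ) (r : ℕ → K)

/-- Since `(Nat.unpair m).1 ≤ m`, the move of TWO copied after `2 * m + 1` moves is already in the
history, so the default value of `getD` is never used. -/
def codingStrategy (h : List (K → Fin 2)) (ξ : K) : Fin 2 :=
  if h.length % 2 = 0 then (if e ξ = h.length / 2 then 1 else 0)
  else h.getD (Nat.unpair (h.length / 2)).1 0 (r (Nat.unpair (h.length / 2)).2)

lemma playOne_codingStrategy_four_mul (w : ℕ → K → Fin 2) (ξ : K) (m : ℕ) :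
    playOne (codingStrategy e r) w (2 * (2 * m)) ξ = if e ξ = m then 1 else 0 := by
  simp [codingStrategy]

lemma playOne_codingStrategy_four_mul_add_two (hre : LeftInverse r e) (w : ℕ → K → Fin 2)
    (ξ : K) (i : ℕ) (k : K) :
    playOne (codingStrategy e r) w (2 * (2 * Nat.pair i (e k) + 1)) ξ = w i k := by
  have hi : i < 2 * Nat.pair i (e k) + 1 := by have := Nat.left_le_pair i (e k); omega
  rw [playOne_two_mul, codingStrategy, List.length_ofFn, if_neg (by omega),
    Nat.mul_add_div two_pos, Nat.div_eq_of_lt one_lt_two, add_zero, Nat.unpair_pair,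
    List.getD_eq_getElem _ _ (by simpa using hi), List.getElem_ofFn, hre k]

lemma injective_column_codingStrategy (hre : LeftInverse r e) :
    Injective (uncurry fun (w : ℕ → K → Fin 2) ξ m => playOne (codingStrategy e r) w m ξ) := by
  rintro ⟨w, ξ⟩ ⟨w', ξ'⟩ h
  simp only [uncurry_apply_pair] at h
  have hw : w = w' := funext₂ fun i k => by
    simpa [playOne_codingStrategy_four_mul_add_two e r hre] using
      congrFun h (2 * (2 * Nat.pair i (e k) + 1))
  have hξ : ξ = ξ' := hre.injective <| by
    simpa [playOne_codingStrategy_four_mul, eq_comm] using congrFun h (2 * (2 * e ξ))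
  rw [hw, hξ]

end CodingStrategy

lemma mk_strategy_le_continuum (M : Type u) [Countable M] : #(List M → M) ≤ 𝔠 := by
  rw [mk_arrow, lift_id, lift_id, ← aleph0_power_aleph0]
  exact (power_le_power_right mk_le_aleph0).trans (power_le_power_left aleph0_ne_zero mk_le_aleph0)

lemma mk_sigma_le_continuum {ι : Type u} [Countable ι] {β : ι → Type u} (h : ∀ i, #(β i) ≤ 𝔠) :
    #(Σ i, β i) ≤ 𝔠 := by
  rw [mk_sigma]
  calc sum (fun i => #(β i)) ≤ sum fun _ : ι => 𝔠 := sum_le_sum _ _ h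
    _ = #ι * 𝔠 := sum_const' _ _
    _ ≤ ℵ₀ * 𝔠 := by gcongr; exact mk_le_aleph0
    _ = 𝔠 := aleph0_mul_continuum

theorem exists_undetermined_of_countable (K : Type) [Countable K] [Nonempty K] :
    ∃ A : Set (ℕ → Fin 2),
      (∀ n : ℕ, 0 < n → (n : Cardinal) < #K → ¬ GSBoardsDetermined (Fin 2) (Fin n) A) ∧
        OneWinsGSBoards (Fin 2) K A := by
  obtain ⟨e, he⟩ := Countable.exists_injective_nat K
  have hmk : #(ℕ → Fin 2) = 𝔠 := by simp
  obtain ⟨A, hcol, htwo, hone⟩ := exists_set_meets_and_avoids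
    (T₁ := Σ n : {n : ℕ // 0 < n}, (List (Fin n → Fin 2) → Fin n → Fin 2))
    (T₂ := Σ n : {n : ℕ // (n : Cardinal) < #K}, (List (Fin n → Fin 2) → Fin n → Fin 2))
    (fun t => Fin t.1.1) (hmk ▸ aleph0_lt_continuum)
    (hmk ▸ mk_sigma_le_continuum fun _ => mk_strategy_le_continuum _)
    (hmk ▸ mk_sigma_le_continuum fun _ => mk_strategy_le_continuum _)
    (injective_column_codingStrategy e (invFun e) (leftInverse_invFun he))
    (fun t => injective_column_playTwo_const t.2 ⟨0, t.1.2⟩)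
    (fun t => by simpa using t.1.2) (fun t => injective_column_playOne_const t.2)
  refine ⟨A, ?_, codingStrategy e (invFun e), fun q hq => ?_⟩
  · rintro n hn hnK (⟨σ, hσ⟩ | ⟨τ, hτ⟩)
    · obtain ⟨y, hy⟩ := hone ⟨⟨n, hnK⟩, σ⟩
      obtain ⟨i, hi⟩ := hσ _ (oneFollows_playOne σ fun k _ => y k)
      exact hy i hi
    · obtain ⟨z, hz⟩ := htwo ⟨⟨n, hn⟩, τ⟩
      exact hτ _ (twoFollows_playTwo τ fun k _ => z k) _ hz
  · obtain ⟨ξ, hξ⟩ := hcol fun k => q (2 * k + 1)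
    exact ⟨ξ, by rwa [hq.eq_playOne]⟩

/-- Theorem (paper Thm 29(1)): for `0 < κ ≤ ℵ₀` there is `A ⊆ ω2` such that
`GS₂(A, n)` is undetermined for `0 < n < κ` while ONE has a winning strategy in
`GS₂(A, κ)`. -/
theorem statement_13 (κ : Cardinal.{0}) (h0 : 0 < κ) (hκ : κ ≤ ℵ₀) :
    ∃ A : Set (ℕ → Fin 2),
      (∀ n : ℕ, 0 < n → (n : Cardinal) < κ → ¬ GSBoardsDetermined (Fin 2) (Fin n) A) ∧
      ∀ K : Type, #K = κ → OneWinsGSBoards (Fin 2) K A := by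
  have : Countable κ.out := mk_le_aleph0_iff.mp (by rwa [mk_out])
  have : Nonempty κ.out := mk_ne_zero_iff.mp (by rw [mk_out]; exact h0.ne')
  obtain ⟨A, hundet, hwin⟩ := exists_undetermined_of_countable κ.out
  refine ⟨A, fun n hn hnκ => hundet n hn (by rwa [mk_out]), fun K hK => ?_⟩
  exact hwin.of_equiv (Cardinal.eq.mp (hK.trans κ.mk_out.symm)).some

end GamePaper
end

section
/- There is a strategy σ for ONE in the game structure G^ω such that, for every play F = (f_n : n < ω) in which ONE follows σ, the sets B^F_i and B^F_j are interlaced for all i, j ∈ ω with i ≠ j. -/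
open Cardinal Set

namespace GamePaper

universe u

/-! ONE sweeps through the coordinates as `0`, `0, 1`, `0, 1, 2`, …, and at round `n` plays a
positive value on the active coordinate `coord n` only, namely `n + 1` plus all of TWO's earlier
answers on the then active coordinates. So the sums `f_{2n}(coord n) + f_{2n+1}(coord n)`
strictly increase with `n`, and `B^F_i` is the image under this increasing map of the rounds at
which `i` is active. For `i < j` these rounds alternate with those of `j` from sweep `j` on, and
increasing maps preserve interlacing. -/

theorem nth_eq_of_strictMono {p : ℕ → Prop} {f : ℕ → ℕ} (hf : StrictMono f)
    (hp : Set.ofPred p = range f) : Nat.nth p = f := by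
  have hinf : (Set.ofPred p).Infinite := hp ▸ infinite_range_of_injective hf.injective
  exact ((Nat.nth_strictMono hinf).range_inj hf).mp (by rw [Nat.range_nth_of_infinite hinf, hp])

theorem interlaced_iff {A B : Set ℕ} :
    Interlaced A B ↔ ∃ a b : ℕ → ℕ, (∀ n, a n < b n ∧ b n < a (n + 1)) ∧
      A ∩ Ici (a 0) = range a ∧ B ∩ Ici (a 0) = range b := by
  constructor
  · rintro ⟨hA, hB, k, hk⟩
    have htail : ∀ {C : Set ℕ}, C.Infinite → (Set.ofPred fun m => m ∈ C ∧ k ≤ m).Infinite :=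
      fun hC => (hC.sdiff (finite_Iio k)).mono fun m hm => ⟨hm.1, not_lt.mp hm.2⟩
    set a := Nat.nth fun m => m ∈ A ∧ k ≤ m
    set b := Nat.nth fun m => m ∈ B ∧ k ≤ m
    have ha := Nat.range_nth_of_infinite (htail hA)
    have hb := Nat.range_nth_of_infinite (htail hB)
    have hka : k ≤ a 0 := (Nat.nth_mem_of_infinite (htail hA) 0).2
    refine ⟨a, b, hk, ?_, ?_⟩
    · rw [ha]
      ext m
      refine ⟨fun ⟨hm, hm0⟩ => ⟨hm, hka.trans hm0⟩, fun hm => ⟨hm.1, ?_⟩⟩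
      obtain ⟨n, rfl⟩ := ha.symm ▸ hm
      exact (Nat.nth_monotone (htail hA)) n.zero_le
    · rw [hb]
      ext m
      refine ⟨fun ⟨hm, hm0⟩ => ⟨hm, hka.trans hm0⟩, fun hm => ⟨hm.1, ?_⟩⟩
      obtain ⟨n, rfl⟩ := hb.symm ▸ hm
      exact (hk 0).1.le.trans ((Nat.nth_monotone (htail hB)) n.zero_le)
  · rintro ⟨a, b, hab, hA, hB⟩
    have ha : StrictMono a := strictMono_nat_of_lt_succ fun n => (hab n).1.trans (hab n).2
    have hb : StrictMono b := strictMono_nat_of_lt_succ fun n => (hab n).2.trans (hab (n + 1)).1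
    refine ⟨(infinite_range_of_injective ha.injective).mono (hA ▸ inter_subset_left),
      (infinite_range_of_injective hb.injective).mono (hB ▸ inter_subset_left), a 0, ?_⟩
    rw [nth_eq_of_strictMono (p := fun m => m ∈ A ∧ a 0 ≤ m) ha hA,
      nth_eq_of_strictMono (p := fun m => m ∈ B ∧ a 0 ≤ m) hb hB]
    exact hab

theorem Interlaced.symm {A B : Set ℕ} (h : Interlaced A B) : Interlaced B A := by
  obtain ⟨a, b, hab, hA, hB⟩ := interlaced_iff.mp h
  have hb : Monotone b :=
    (strictMono_nat_of_lt_succ fun n => (hab n).2.trans (hab (n + 1)).1).monotone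
  rw [Set.ext_iff] at hA hB
  refine interlaced_iff.mpr ⟨b, fun n => a (n + 1), fun n => ⟨(hab n).2, (hab (n + 1)).1⟩, ?_, ?_⟩
  · ext m
    refine ⟨fun ⟨hm, hm0⟩ => (hB m).mp ⟨hm, (hab 0).1.le.trans hm0⟩, ?_⟩
    rintro ⟨n, rfl⟩
    exact ⟨((hB _).mpr ⟨n, rfl⟩).1, hb n.zero_le⟩
  · ext m
    constructor
    · rintro ⟨hm, hm0⟩
      obtain ⟨_ | n, rfl⟩ := (hA m).mp ⟨hm, (hab 0).1.le.trans hm0⟩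
      · exact absurd hm0 (not_le.mpr (hab 0).1)
      · exact ⟨n, rfl⟩
    · rintro ⟨n, rfl⟩
      exact ⟨((hA _).mpr ⟨n + 1, rfl⟩).1, (hb n.zero_le).trans (hab n).2.le⟩

theorem Interlaced.image {A B : Set ℕ} {s : ℕ → ℕ} (h : Interlaced A B) (hs : StrictMono s) :
    Interlaced (s '' A) (s '' B) := by
  obtain ⟨a, b, hab, hA, hB⟩ := interlaced_iff.mp h
  have hcut : ∀ C : Set ℕ, s '' C ∩ Ici (s (a 0)) = s '' (C ∩ Ici (a 0)) := by
    intro C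
    ext m
    constructor
    · rintro ⟨⟨y, hy, rfl⟩, hle⟩
      exact ⟨y, ⟨hy, hs.le_iff_le.mp hle⟩, rfl⟩
    · rintro ⟨y, ⟨hy, hle⟩, rfl⟩
      exact ⟨⟨y, hy, rfl⟩, hs.monotone hle⟩
  refine interlaced_iff.mpr ⟨s ∘ a, s ∘ b, fun n => ⟨hs (hab n).1, hs (hab n).2⟩, ?_, ?_⟩ <;>
    simp only [Function.comp_apply, hcut, hA, hB, range_comp]

def triangular : ℕ → ℕ
  | 0 => 0
  | k + 1 => triangular k + (k + 1)

theorem triangular_succ (k : ℕ) : triangular (k + 1) = triangular k + (k + 1) := rfl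

theorem triangular_strictMono : StrictMono triangular :=
  strictMono_nat_of_lt_succ fun k => by rw [triangular_succ]; omega

def sweep : ℕ → ℕ × ℕ
  | 0 => (0, 0)
  | n + 1 =>
    if (sweep n).2 < (sweep n).1 then ((sweep n).1, (sweep n).2 + 1) else ((sweep n).1 + 1, 0)

theorem sweep_triangular_add {k i : ℕ} (h : i ≤ k) : sweep (triangular k + i) = (k, i) := by
  induction k generalizing i with
  | zero =>
    obtain rfl : i = 0 := by omega
    rfl
  | succ k ihk =>
    induction i with
    | zero =>
      show sweep (triangular k + k + 1) = _
      rw [sweep, ihk le_rfl]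
      simp
    | succ i ihi =>
      show sweep (triangular (k + 1) + i + 1) = _
      rw [sweep, ihi (by omega), if_pos (by omega)]

theorem sweep_spec (n : ℕ) :
    (sweep n).2 ≤ (sweep n).1 ∧ triangular (sweep n).1 + (sweep n).2 = n := by
  induction n with
  | zero => simp [sweep, triangular]
  | succ n ih =>
    rw [sweep]
    split_ifs <;> simp only [triangular] <;> omega

def coord (n : ℕ) : ℕ := (sweep n).2

theorem coord_eq_iff {n i : ℕ} : coord n = i ↔ ∃ k, i ≤ k ∧ triangular k + i = n := by
  constructor
  · rintro rfl
    exact ⟨_, sweep_spec n⟩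
  · rintro ⟨k, hik, rfl⟩
    simp [coord, sweep_triangular_add hik]

theorem interlaced_coord_fibers_of_lt {i j : ℕ} (h : i < j) :
    Interlaced {n | coord n = i} {n | coord n = j} := by
  have hmono := triangular_strictMono
  refine interlaced_iff.mpr ⟨fun t => triangular (j + t) + i, fun t => triangular (j + t) + j,
    fun t => ⟨Nat.add_lt_add_left h _, ?_⟩, ?_, ?_⟩
  · show triangular (j + t) + j < triangular (j + t + 1) + i
    rw [triangular_succ]
    omega
  all_goals
  · ext m
    simp only [mem_inter_iff, mem_ofPred_eq, mem_Ici, mem_range, coord_eq_iff, add_zero]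
    constructor
    · rintro ⟨⟨k, hk, rfl⟩, hle⟩
      have hjk : j ≤ k := by
        by_contra hkj
        have := hmono (not_le.mp hkj)
        omega
      exact ⟨k - j, by rw [Nat.add_sub_cancel' hjk]⟩
    · rintro ⟨t, rfl⟩
      have := hmono.monotone (j.le_add_right t)
      exact ⟨⟨j + t, by omega, rfl⟩, by omega⟩

theorem interlaced_coord_fibers {i j : ℕ} (h : i ≠ j) :
    Interlaced {n | coord n = i} {n | coord n = j} :=
  h.lt_or_gt.elim interlaced_coord_fibers_of_lt fun h => (interlaced_coord_fibers_of_lt h).symm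

def interlacingStrategy (L : List (ℕ → ℕ)) : ℕ → ℕ :=
  Pi.single (coord L.length) (L.length + 1 + (L.mapIdx fun m f => f (coord m)).sum)

theorem OneFollows.interlacingStrategy_apply {F : ℕ → ℕ → ℕ}
    (hF : OneFollows interlacingStrategy F) (n : ℕ) :
    F (2 * n) = Pi.single (coord n) (n + 1 + ∑ m ∈ Finset.range n, F (2 * m + 1) (coord m)) := by
  rw [hF n, interlacingStrategy]
  simp [List.mapIdx_eq_ofFn, List.sum_ofFn,
    Fin.sum_univ_eq_sum_range (fun m => F (2 * m + 1) (coord m))]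

theorem BF_eq_image {F : ℕ → ℕ → ℕ} (hF : OneFollows interlacingStrategy F) (i : ℕ) :
    BF F i = (fun n => n + 1 + ∑ m ∈ Finset.range (n + 1), F (2 * m + 1) (coord m)) ''
      {n | coord n = i} := by
  ext x
  simp only [BF, mem_ofPred_eq, mem_image, hF.interlacingStrategy_apply, Pi.single_apply,
    Finset.sum_range_succ]
  constructor
  · rintro ⟨n, hpos, rfl⟩
    split_ifs at hpos ⊢ with h
    · exact ⟨n, h.symm, by rw [h]; ring⟩
    · exact absurd hpos (lt_irrefl 0)
  · rintro ⟨n, rfl, rfl⟩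
    exact ⟨n, by simp, by simp only [if_true]; ring⟩

theorem strictMono_succ_add_sum_range (t : ℕ → ℕ) :
    StrictMono fun n => n + 1 + ∑ m ∈ Finset.range (n + 1), t m :=
  strictMono_nat_of_lt_succ fun n => by
    simp only [Finset.sum_range_succ _ (n + 1)]
    omega

/-- Lemma (paper Lemma 30): there is a strategy `σ` for ONE in the game structure `G^ω`
such that for every play `F` following `σ`, the sets `B^F_i` and `B^F_j` are interlaced
for all `i ≠ j`. -/
theorem statement_15 :
    ∃ σ : List (ℕ → ℕ) → ℕ → ℕ, ∀ F : ℕ → ℕ → ℕ, OneFollows σ F →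
      ∀ i j : ℕ, i ≠ j → Interlaced (BF F i) (BF F j) := by
  refine ⟨interlacingStrategy, fun F hF i j hij => ?_⟩
  rw [BF_eq_image hF, BF_eq_image hF]
  exact (interlaced_coord_fibers hij).image (strictMono_succ_add_sum_range _)

end GamePaper
end

section
/- For all A, B ⊆ ω, if D(A,B) holds, then I(A) ∩ I(B) = ∅; that is, no set C ⊆ ω is interlaced with both A and B. -/
open Cardinal Set

namespace GamePaper

universe u

/-! If `C` is interlaced with `A`, then from some point on every two elements of `A` have an
element of `C` strictly between them, and vice versa. So if `C` is interlaced with both `A` and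
`B`, then for `a₁ < a₂ < a₃` in `A` far enough out we find `c ∈ (a₁, a₂)` and `c' ∈ (a₂, a₃)` in
`C`, and then an element of `B` in `(c, c') ⊆ (a₁, a₃)`, which `D(A,B)` forbids. -/

def EventuallySeparates (Y X : Set ℕ) : Prop :=
  ∃ k, ∀ x ∈ X, ∀ y ∈ X, k ≤ x → x < y → ∃ z ∈ Y, x < z ∧ z < y

theorem infinite_setOf_mem_and_le {X : Set ℕ} (hX : X.Infinite) (k : ℕ) :
    {m | m ∈ X ∧ k ≤ m}.Infinite :=
  (hX.sdiff (Set.finite_Iio k)).mono fun _ hm => ⟨hm.1, not_lt.mp hm.2⟩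

open Classical in
theorem exists_lt_nth_eq_nth_eq {X : Set ℕ} {k x y : ℕ} (hx : x ∈ X) (hy : y ∈ X)
    (hkx : k ≤ x) (hxy : x < y) :
    ∃ i j, i < j ∧ Nat.nth (fun m => m ∈ X ∧ k ≤ m) i = x ∧
      Nat.nth (fun m => m ∈ X ∧ k ≤ m) j = y :=
  ⟨_, _, Nat.count_strict_mono ⟨hx, hkx⟩ hxy, Nat.nth_count ⟨hx, hkx⟩,
    Nat.nth_count ⟨hy, hkx.trans hxy.le⟩⟩

theorem monotone_of_interleave {f g : ℕ → ℕ} (hfg : ∀ n, f n < g n)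
    (hgf : ∀ n, g n < f (n + 1)) : Monotone f ∧ Monotone g :=
  ⟨monotone_nat_of_le_succ fun n => ((hfg n).trans (hgf n)).le,
    monotone_nat_of_le_succ fun n => ((hgf n).trans (hfg (n + 1))).le⟩

theorem Interlaced.right_separates_left {A C : Set ℕ} (h : Interlaced A C) :
    EventuallySeparates C A := by
  obtain ⟨-, hC, k, hk⟩ := h
  refine ⟨k, fun x hx y hy hkx hxy => ?_⟩
  obtain ⟨i, j, hij, rfl, rfl⟩ := exists_lt_nth_eq_nth_eq hx hy hkx hxy
  have hA := (monotone_of_interleave (fun n => (hk n).1) (fun n => (hk n).2)).1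
  exact ⟨_, (Nat.nth_mem_of_infinite (infinite_setOf_mem_and_le hC k) i).1, (hk i).1,
    (hk i).2.trans_le (hA hij)⟩

theorem Interlaced.left_separates_right {A C : Set ℕ} (h : Interlaced A C) :
    EventuallySeparates A C := by
  obtain ⟨hA, -, k, hk⟩ := h
  refine ⟨k, fun x hx y hy hkx hxy => ?_⟩
  obtain ⟨i, j, hij, rfl, rfl⟩ := exists_lt_nth_eq_nth_eq hx hy hkx hxy
  have hC := (monotone_of_interleave (fun n => (hk n).1) (fun n => (hk n).2)).2
  exact ⟨_, (Nat.nth_mem_of_infinite (infinite_setOf_mem_and_le hA k) (i + 1)).1, (hk i).2,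
    (hk (i + 1)).1.trans_le (hC hij)⟩

theorem EventuallySeparates.exists_mem_between_of_lt_of_lt {A B C : Set ℕ}
    (hCA : EventuallySeparates C A) (hBC : EventuallySeparates B C) :
    ∃ k, ∀ a₁ ∈ A, ∀ a₂ ∈ A, ∀ a₃ ∈ A, k ≤ a₁ → a₁ < a₂ → a₂ < a₃ →
      ∃ b ∈ B, a₁ < b ∧ b < a₃ := by
  obtain ⟨k, hk⟩ := hCA
  obtain ⟨l, hl⟩ := hBC
  refine ⟨max k l, fun a₁ h₁ a₂ h₂ a₃ h₃ hka₁ h₁₂ h₂₃ => ?_⟩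
  obtain ⟨c, hc, h₁c, hc₂⟩ := hk a₁ h₁ a₂ h₂ (le_of_max_le_left hka₁) h₁₂
  obtain ⟨c', hc', h₂c', hc'₃⟩ := hk a₂ h₂ a₃ h₃ (le_of_max_le_left hka₁ |>.trans h₁₂.le) h₂₃
  obtain ⟨b, hb, hcb, hbc'⟩ :=
    hl c hc c' hc' ((le_of_max_le_right hka₁).trans h₁c.le) (hc₂.trans h₂c')
  exact ⟨b, hb, h₁c.trans hcb, hbc'.trans hc'₃⟩

/-- Lemma (paper Lemma 32): if `D(A,B)` holds then `I(A) ∩ I(B) = ∅`: no set is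
interlaced with both `A` and `B`. -/
theorem statement_17 (A B : Set ℕ) (h : DRel A B) :
    {C : Set ℕ | Interlaced A C} ∩ {C : Set ℕ | Interlaced B C} = ∅ := by
  refine Set.eq_empty_of_forall_notMem fun C ⟨hAC, hBC⟩ => ?_
  rcases h with hA | hB | hD
  · exact hAC.1 hA
  · exact hBC.1 hB
  obtain ⟨k, hk⟩ :=
    hAC.right_separates_left.exists_mem_between_of_lt_of_lt hBC.left_separates_right
  obtain ⟨a₁, a₂, a₃, h₁, h₂, h₃, hka₁, h₁₂, h₂₃, hB⟩ := hD k
  exact hB (hk a₁ h₁ a₂ h₂ a₃ h₃ hka₁ h₁₂ h₂₃)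

end GamePaper
end

section
/- There is a set S ⊆ ω{0,1} (a set of functions ω → {0,1}) such that the κ-board Gale–Stewart game GS_2(S,κ) is undetermined for every nonzero cardinal κ with 2^κ ≤ 2^ℵ0. -/
open Cardinal Set

namespace GamePaper

universe u

/-! Diagonalize, in `𝔠` steps, over the single-board strategies `τ` of TWO: against each `τ`
pick ONE-moves `a τ` that differ from the moves of every ONE-strategy of rank at most that of `τ`
in its play against `τ`, and let `S` consist of the resulting plays. TWO cannot win on `κ` boards,
since ONE may play `a τ` on every board, `τ` being what TWO's strategy does on a fixed board.
ONE cannot win either: if TWO plays the same sequence `u` on all boards, a winning board `ξ`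
makes `u` TWO's half of a diagonal play against some `τ` ranked below ONE's strategy on board
`ξ`. Each board thus accounts for fewer than `𝔠` sequences `u`, and `κ < cf 𝔠` by König's
theorem, so some `u` escapes all boards. -/

section Cardinal

theorem mk_iUnion_lt_of_lt_cof {ι α : Type u} {s : ι → Set α} {c : Cardinal.{u}}
    (hc : ℵ₀ ≤ c) (hι : #ι < c.ord.cof) (hs : ∀ i, #(s i) < c) : #(⋃ i, s i) < c :=
  (mk_iUnion_le s).trans_lt <|
    mul_lt_of_lt hc (hι.trans_le (Ordinal.cof_ord_le c)) (iSup_lt_of_lt_cof_ord hι hs)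

theorem lt_cof_ord_continuum_of_two_power_le {κ : Cardinal} (h : 2 ^ κ ≤ 𝔠) :
    κ < (ord 𝔠).cof := by
  rcases lt_or_ge κ ℵ₀ with hfin | hinf
  · exact hfin.trans_le <| Ordinal.aleph0_le_cof_iff.2 <|
      Ordinal.one_lt_cof_iff.2 (isSuccLimit_ord aleph0_le_continuum)
  · have h2κ : 2 ^ κ = 𝔠 :=
      h.antisymm (two_power_aleph0 ▸ power_le_power_left two_ne_zero hinf)
    simpa [h2κ] using lt_cof_ord_power hinf one_lt_two

theorem exists_rank_mk_le_lt (α : Type u) [Infinite α] :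
    ∃ rk : α → (#α).ord.ToType, ∀ x, #{y | rk y ≤ rk x} < #α := by
  obtain ⟨e⟩ : Nonempty (α ≃ (#α).ord.ToType) := Cardinal.eq.1 (mk_ord_toType #α).symm
  refine ⟨e, fun x => ?_⟩
  have hIio : #(Iio (e x)) < #α := by simpa using mk_Iio_lt (e x) (by simp)
  calc #{y | e y ≤ e x} = #(insert (e x) (Iio (e x)) : Set _) := by
        rw [Iio_insert]; exact mk_preimage_equiv e (Iic (e x))
    _ ≤ #(Iio (e x)) + 1 := mk_insert_le
    _ < #α := add_lt_of_lt (aleph0_le_mk α) hIio (one_lt_aleph0.trans_le (aleph0_le_mk α))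

theorem exists_forall_ne_of_mk_lt {α β : Type u} (s : α → Set α) (F : α → α → β)
    (hs : ∀ x, #(s x) < #β) : ∃ a : α → β, ∀ x, ∀ y ∈ s x, a x ≠ F y x := by
  have (x : α) : ∃ b, b ∉ (F · x) '' s x :=
    compl_nonempty_of_mk_lt_mk (mk_image_le.trans_lt (hs x))
  choose a ha using this
  exact ⟨a, fun x y hy hxy => ha x ⟨y, hy, hxy.symm⟩⟩

end Cardinal

section Plays

variable {M : Type*}

def interleave (a b : ℕ → M) (n : ℕ) : M :=
  if n % 2 = 0 then a (n / 2) else b (n / 2)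

@[simp]
theorem interleave_two_mul (a b : ℕ → M) (n : ℕ) : interleave a b (2 * n) = a n := by
  simp [interleave]

@[simp]
theorem interleave_two_mul_add_one (a b : ℕ → M) (n : ℕ) :
    interleave a b (2 * n + 1) = b n := by
  simp [interleave, Nat.add_div]

theorem interleave_injective {a b a' b' : ℕ → M} (h : interleave a b = interleave a' b') :
    a = a' ∧ b = b' :=
  ⟨funext fun n => by simpa using congrFun h (2 * n),
    funext fun n => by simpa using congrFun h (2 * n + 1)⟩

theorem interleave_apply {ι : Type*} (a b : ℕ → ι → M) (i : ι) :
    (fun n => interleave a b n i) = interleave (fun n => a n i) (fun n => b n i) := by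
  funext n
  simp only [interleave]
  split_ifs <;> rfl

def oneReplies (σ : List M → M) (b : ℕ → M) (n : ℕ) : M :=
  σ (List.ofFn fun i : Fin n => b i)

def twoReplies (τ : List M → M) (a : ℕ → M) (n : ℕ) : M :=
  τ (List.ofFn fun i : Fin (n + 1) => a i)

theorem oneFollows_interleave_iff {σ : List M → M} {a b : ℕ → M} :
    OneFollows σ (interleave a b) ↔ a = oneReplies σ b := by
  simp [OneFollows, oneReplies, funext_iff]

theorem twoFollows_interleave_iff {τ : List M → M} {a b : ℕ → M} :
    TwoFollows τ (interleave a b) ↔ b = twoReplies τ a := by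
  simp [TwoFollows, twoReplies, funext_iff]

/-- ONE's moves in the play of `σ` against `τ`. -/
def oneMoves (σ τ : List M → M) (n : ℕ) : M :=
  σ (List.ofFn fun i : Fin n => τ (List.ofFn fun j : Fin (i + 1) => oneMoves σ τ j))
termination_by n
decreasing_by exact j.isLt.trans_le i.isLt

theorem eq_oneMoves {σ τ : List M → M} {a : ℕ → M} (h : a = oneReplies σ (twoReplies τ a)) :
    a = oneMoves σ τ := by
  funext n
  induction n using Nat.strong_induction_on with
  | _ n ih =>
    rw [h, oneMoves]
    simp only [oneReplies, twoReplies]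
    congr! 4 with i
    exact congrArg List.ofFn (funext fun j => ih j (j.isLt.trans_le i.isLt))

end Plays

section Boards

variable {Λ K : Type*}

/-- The single-board strategy that `σ` follows on board `ξ` while the opponent makes the same
move on every board. -/
def boardStrategy (σ : List (K → Λ) → K → Λ) (ξ : K) (l : List Λ) : Λ :=
  σ (l.map fun v _ => v) ξ

theorem oneReplies_const_apply (σ : List (K → Λ) → K → Λ) (b : ℕ → Λ) (ξ : K) :
    (fun n => oneReplies σ (fun n _ => b n) n ξ) = oneReplies (boardStrategy σ ξ) b := by
  funext n
  simp only [oneReplies, boardStrategy, List.map_ofFn]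
  rfl

theorem twoReplies_const_apply (τ : List (K → Λ) → K → Λ) (a : ℕ → Λ) (ξ : K) :
    (fun n => twoReplies τ (fun n _ => a n) n ξ) = twoReplies (boardStrategy τ ξ) a := by
  funext n
  simp only [twoReplies, boardStrategy, List.map_ofFn]
  rfl

def diagonalSet (a : (List Λ → Λ) → ℕ → Λ) : Set (ℕ → Λ) :=
  range fun τ => interleave (a τ) (twoReplies τ (a τ))

theorem not_twoWinsGSBoards_diagonalSet [Nonempty K] (a : (List Λ → Λ) → ℕ → Λ) :
    ¬ TwoWinsGSBoards Λ K (diagonalSet a) := by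
  rintro ⟨τ, hτ⟩
  obtain ⟨ξ⟩ := ‹Nonempty K›
  set b := a (boardStrategy τ ξ)
  refine hτ (interleave (fun n _ => b n) (twoReplies τ fun n _ => b n))
    (twoFollows_interleave_iff.2 rfl) ξ ⟨boardStrategy τ ξ, ?_⟩
  simp only [interleave_apply, twoReplies_const_apply]
  rfl

theorem lt_rank_of_interleave_mem_diagonalSet {ι : Type*} [LinearOrder ι]
    {rk : (List Λ → Λ) → ι} {a : (List Λ → Λ) → ℕ → Λ}
    (ha : ∀ τ σ, rk σ ≤ rk τ → a τ ≠ oneMoves σ τ) {σ : List Λ → Λ} {u : ℕ → Λ}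
    (h : interleave (oneReplies σ u) u ∈ diagonalSet a) :
    ∃ τ, rk τ < rk σ ∧ twoReplies τ (a τ) = u := by
  obtain ⟨τ, hτ⟩ := h
  obtain ⟨hone, htwo⟩ := interleave_injective hτ
  refine ⟨τ, lt_of_not_ge fun hle => ha τ σ hle (eq_oneMoves ?_), htwo⟩
  rwa [htwo]

end Boards

section Diagonal

variable {Λ K : Type u}

theorem not_oneWinsGSBoards_diagonalSet [Nontrivial Λ] {ι : Type*} [LinearOrder ι]
    {rk : (List Λ → Λ) → ι} {a : (List Λ → Λ) → ℕ → Λ}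
    (ha : ∀ τ σ, rk σ ≤ rk τ → a τ ≠ oneMoves σ τ)
    (hrk : ∀ σ, #{τ | rk τ < rk σ} < #(ℕ → Λ)) (hK : #K < (#(ℕ → Λ)).ord.cof) :
    ¬ OneWinsGSBoards Λ K (diagonalSet a) := by
  rintro ⟨σ, hσ⟩
  have hcover (u : ℕ → Λ) :
      u ∈ ⋃ ξ, (fun τ => twoReplies τ (a τ)) '' {τ | rk τ < rk (boardStrategy σ ξ)} := by
    obtain ⟨ξ, hξ⟩ := hσ _ ((oneFollows_interleave_iff (b := fun n _ => u n)).2 rfl)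
    simp only [interleave_apply, oneReplies_const_apply] at hξ
    exact mem_iUnion.2 ⟨ξ, lt_rank_of_interleave_mem_diagonalSet ha hξ⟩
  have hsmall := mk_iUnion_lt_of_lt_cof (aleph0_le_mk _) hK fun ξ =>
    (mk_image_le (f := fun τ => twoReplies τ (a τ))).trans_lt (hrk (boardStrategy σ ξ))
  rw [eq_univ_of_forall hcover, mk_univ] at hsmall
  exact hsmall.false

theorem mk_strategy_eq (Λ : Type u) [Countable Λ] [Nonempty Λ] :
    #(List Λ → Λ) = #(ℕ → Λ) := by
  simp

theorem exists_forall_not_gsBoardsDetermined (Λ : Type u) [Countable Λ] [Nontrivial Λ] :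
    ∃ S : Set (ℕ → Λ), ∀ K : Type u, Nonempty K → #K < (#(ℕ → Λ)).ord.cof →
      ¬ GSBoardsDetermined Λ K S := by
  obtain ⟨rk, hrk⟩ := exists_rank_mk_le_lt (List Λ → Λ)
  have hrk_le (τ : List Λ → Λ) : #{σ | rk σ ≤ rk τ} < #(ℕ → Λ) :=
    (hrk τ).trans_eq (mk_strategy_eq Λ)
  obtain ⟨a, ha⟩ := exists_forall_ne_of_mk_lt _ oneMoves hrk_le
  have hrk_lt (σ : List Λ → Λ) : #{τ | rk τ < rk σ} < #(ℕ → Λ) :=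
    (mk_le_mk_of_subset (ofPred_subset_ofPred.2 fun _ => le_of_lt)).trans_lt (hrk_le σ)
  exact ⟨diagonalSet a, fun K _ hK h =>
    h.elim (not_oneWinsGSBoards_diagonalSet ha hrk_lt hK) (not_twoWinsGSBoards_diagonalSet a)⟩

end Diagonal

/-- Lemma (paper Lemma 37): there is `S ⊆ ω2` such that `GS₂(S,κ)` is undetermined for
every nonzero cardinal `κ` with `2^κ ≤ 2^ℵ₀`. -/
theorem statement_19 :
    ∃ S : Set (ℕ → Fin 2), ∀ K : Type, #K ≠ 0 →
      (2 : Cardinal) ^ #K ≤ Cardinal.continuum →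
      ¬ GSBoardsDetermined (Fin 2) K S := by
  obtain ⟨S, hS⟩ := exists_forall_not_gsBoardsDetermined (Fin 2)
  have hcard : #(ℕ → Fin 2) = 𝔠 := by simp
  refine ⟨S, fun K hK hpow => hS K (mk_ne_zero_iff.1 hK) ?_⟩
  rw [hcard]
  exact lt_cof_ord_continuum_of_two_power_le hpow

end GamePaper
end
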